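/- arXiv:1106.0602 — 6 statements merged into one kernel-verified Lean document; each statement's English description precedes it below -/
import Mathlib

section
/- Let B be a reflexive real Banach space whose norm is strictly convex, let I, J : B → ℝ be continuously Fréchet differentiable functionals, and let u ∈ B satisfy J(u) = 1. Assume u is not a critical point of I with respect to S := {v ∈ B | J(v) = 1}, i.e. there is no α ∈ ℝ with I'(u) = α J'(u). Then the problem of minimizing the linear functional w ↦ ⟨I'(u), w⟩ over the set C := {v ∈ B | ⟨J'(u), v⟩ = 0 and ‖v‖ = 1} has a unique solution. -/
/-!
Let `φ = I'(u)` and `ψ = J'(u)`. Since `φ` is not a multiple of `ψ`, it takes a negative value on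
`ker ψ`. By reflexivity the unit ball of `ker ψ` is weakly compact, so `φ` attains its minimum `m`
there, and `m < 0`. Minimality gives `m ‖x‖ ≤ φ x` on `ker ψ`; hence the minimizer lies on the
unit sphere, and two distinct minimizers on the sphere are impossible: their midpoint has value `m`
but, by strict convexity, norm `< 1`, contradicting `m ‖x‖ ≤ φ x` since `m < 0`.
-/

open Metric NormedSpace

theorem StrictConvexSpace.of_norm_half_add_lt_one {E : Type*} [NormedAddCommGroup E]
    [NormedSpace ℝ E]
    (h : ∀ x y : E, x ≠ y → ‖x‖ = 1 → ‖y‖ = 1 → ‖(1 / 2 : ℝ) • (x + y)‖ < 1) :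
    StrictConvexSpace ℝ E := by
  refine StrictConvexSpace.of_norm_add_ne_two fun x y hx hy hne hsum => ?_
  have := h x y hne hx hy
  rw [norm_smul, hsum] at this
  norm_num at this

theorem exists_mem_ker_apply_neg {E : Type*} [NormedAddCommGroup E] [NormedSpace ℝ E]
    {φ ψ : StrongDual ℝ E} (h : ¬∃ α : ℝ, φ = α • ψ) :
    ∃ v ∈ LinearMap.ker (ψ : E →ₗ[ℝ] ℝ), φ v < 0 := by
  by_contra! hnonneg
  have hker : ⨅ _ : Unit, LinearMap.ker (ψ : E →ₗ[ℝ] ℝ) ≤ LinearMap.ker (φ : E →ₗ[ℝ] ℝ) := by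
    intro v hv
    simp only [iInf_const, LinearMap.mem_ker, ContinuousLinearMap.coe_coe] at hv ⊢
    have h₁ := hnonneg v (LinearMap.mem_ker.2 hv)
    have h₂ := hnonneg (-v) (by simp [hv])
    simp only [map_neg] at h₂
    linarith
  obtain ⟨α, hα⟩ := Submodule.mem_span_singleton.1
    (by simpa using mem_span_of_iInf_ker_le_ker hker)
  exact h ⟨α, ContinuousLinearMap.coe_injective hα.symm⟩

theorem exists_isMinOn_ker_inter_closedBall {E : Type*} [NormedAddCommGroup E] [NormedSpace ℝ E]
    (hrefl : Function.Surjective (inclusionInDoubleDual ℝ E)) (φ ψ : StrongDual ℝ E) :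
    ∃ w ∈ (LinearMap.ker (ψ : E →ₗ[ℝ] ℝ) : Set E) ∩ closedBall 0 1,
      IsMinOn φ ((LinearMap.ker (ψ : E →ₗ[ℝ] ℝ) : Set E) ∩ closedBall 0 1) w := by
  set s := (LinearMap.ker (ψ : E →ₗ[ℝ] ℝ) : Set E) ∩ closedBall 0 1
  set j : E → WeakDual ℝ (StrongDual ℝ E) :=
    fun x => StrongDual.toWeakDual (inclusionInDoubleDual ℝ E x)
  have hnorm (x : E) : ‖inclusionInDoubleDual ℝ E x‖ = ‖x‖ :=
    (inclusionInDoubleDualLi ℝ).norm_map x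
  -- Reflexivity identifies this set with a weak-* compact subset of the bidual (Banach–Alaoglu).
  have himage : j '' s = WeakDual.toStrongDual ⁻¹' closedBall 0 1 ∩ {F | F ψ = 0} := by
    ext F
    constructor
    · rintro ⟨x, ⟨hψx, hx⟩, rfl⟩
      rw [mem_closedBall_zero_iff, ← hnorm] at hx
      exact ⟨show inclusionInDoubleDual ℝ E x ∈ closedBall 0 1 from
        (mem_closedBall_zero_iff (E := StrongDual ℝ (StrongDual ℝ E))).2 hx, hψx⟩
    · rintro ⟨hF, hψF⟩
      obtain ⟨x, hx⟩ := hrefl (WeakDual.toStrongDual F)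
      have hx₁ : ‖x‖ ≤ 1 := by
        rw [← hnorm, hx]; exact (mem_closedBall_zero_iff (E := StrongDual ℝ (StrongDual ℝ E))).1 hF
      refine ⟨x, ⟨?_, mem_closedBall_zero_iff.2 hx₁⟩, hx⟩
      exact (congrArg (fun G : StrongDual ℝ (StrongDual ℝ E) => G ψ) hx).trans hψF
  have hcompact : IsCompact (j '' s) := by
    rw [himage]
    exact (WeakDual.isCompact_closedBall (0 : StrongDual ℝ (StrongDual ℝ E)) 1).inter_right
      (isClosed_eq (WeakDual.eval_continuous ψ) continuous_const)
  obtain ⟨_, ⟨w, hw, rfl⟩, hmin⟩ := hcompact.exists_isMinOn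
    (Set.Nonempty.image j ⟨0, by simp [s]⟩) (WeakDual.eval_continuous φ).continuousOn
  exact ⟨w, hw, fun v hv => hmin (Set.mem_image_of_mem j hv)⟩

section MinOnSphere

variable {E : Type*} [NormedAddCommGroup E] [NormedSpace ℝ E] {K : Submodule ℝ E}
  {φ : StrongDual ℝ E} {w : E}

theorem IsMinOn.mul_norm_le_of_inter_sphere (hw : IsMinOn φ ((K : Set E) ∩ sphere 0 1) w) {x : E}
    (hx : x ∈ K) : φ w * ‖x‖ ≤ φ x := by
  rcases eq_or_ne x 0 with rfl | hx₀
  · simp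
  have hnorm : 0 < ‖x‖ := norm_pos_iff.2 hx₀
  have hmin : φ w ≤ ‖x‖⁻¹ * φ x := by
    simpa using hw ⟨K.smul_mem ‖x‖⁻¹ hx, by simp [norm_smul, hnorm.ne']⟩
  calc φ w * ‖x‖ ≤ ‖x‖⁻¹ * φ x * ‖x‖ := by gcongr
    _ = φ x := by field_simp

theorem IsMinOn.apply_neg_of_inter_sphere (hw : IsMinOn φ ((K : Set E) ∩ sphere 0 1) w) {v : E}
    (hv : v ∈ K) (hφv : φ v < 0) : φ w < 0 := by
  have := hw.mul_norm_le_of_inter_sphere hv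
  by_contra! h
  nlinarith [norm_nonneg v]

theorem IsMinOn.norm_eq_one_of_inter_closedBall (hw : IsMinOn φ ((K : Set E) ∩ closedBall 0 1) w)
    (hwK : w ∈ (K : Set E) ∩ closedBall 0 1) (hφw : φ w < 0) : ‖w‖ = 1 := by
  have h := (hw.on_subset (Set.inter_subset_inter_right _ sphere_subset_closedBall))
    |>.mul_norm_le_of_inter_sphere hwK.1
  have := mem_closedBall_zero_iff.1 hwK.2
  nlinarith

theorem IsMinOn.eq_of_inter_sphere [StrictConvexSpace ℝ E] {w' : E}
    (hw : IsMinOn φ ((K : Set E) ∩ sphere 0 1) w) (hw' : IsMinOn φ ((K : Set E) ∩ sphere 0 1) w')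
    (hwK : w ∈ (K : Set E) ∩ sphere 0 1) (hw'K : w' ∈ (K : Set E) ∩ sphere 0 1)
    (hφw : φ w < 0) : w = w' := by
  by_contra hne
  set z := (1 / 2 : ℝ) • (w + w')
  have hw₁ : ‖w‖ = 1 := mem_sphere_zero_iff_norm.1 hwK.2
  have hz : ‖z‖ < 1 := by
    have hnorm : ‖w‖ = ‖w'‖ := by rw [hw₁, mem_sphere_zero_iff_norm.1 hw'K.2]
    simpa only [hw₁] using (norm_midpoint_lt_iff hnorm).2 hne
  have hφz : φ z = φ w := by
    have hφw' := le_antisymm (isMinOn_iff.1 hw w' hw'K) (isMinOn_iff.1 hw' w hwK)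
    simp only [z, map_smul, map_add, smul_eq_mul, hφw']
    ring
  have := hw.mul_norm_le_of_inter_sphere (K.smul_mem (1 / 2 : ℝ) (K.add_mem hwK.1 hw'K.1))
  rw [hφz] at this
  nlinarith

end MinOnSphere

theorem stmt_0_general {B : Type*} [NormedAddCommGroup B] [NormedSpace ℝ B]
    (hrefl : Function.Surjective (NormedSpace.inclusionInDoubleDual ℝ B))
    (hconv : ∀ w₁ w₂ : B, w₁ ≠ w₂ → ‖w₁‖ = 1 → ‖w₂‖ = 1 → ‖(1 / 2 : ℝ) • (w₁ + w₂)‖ < 1)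
    (I J : B → ℝ) (u : B)
    (hcrit : ¬ ∃ α : ℝ, fderiv ℝ I u = α • fderiv ℝ J u) :
    ∃! w : B, (fderiv ℝ J u w = 0 ∧ ‖w‖ = 1) ∧
      ∀ v : B, (fderiv ℝ J u v = 0 ∧ ‖v‖ = 1) → fderiv ℝ I u w ≤ fderiv ℝ I u v := by
  set φ := fderiv ℝ I u
  set ψ := fderiv ℝ J u
  set K := LinearMap.ker (ψ : B →ₗ[ℝ] ℝ)
  have hC (x : B) : x ∈ (K : Set B) ∩ sphere 0 1 ↔ ψ x = 0 ∧ ‖x‖ = 1 := by simp [K]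
  have := StrictConvexSpace.of_norm_half_add_lt_one hconv
  obtain ⟨v, hvK, hφv⟩ := exists_mem_ker_apply_neg hcrit
  obtain ⟨w, hwK, hmin⟩ := exists_isMinOn_ker_inter_closedBall hrefl φ ψ
  have hmin' : IsMinOn φ ((K : Set B) ∩ sphere 0 1) w :=
    hmin.on_subset (Set.inter_subset_inter_right _ sphere_subset_closedBall)
  have hφw : φ w < 0 := hmin'.apply_neg_of_inter_sphere hvK hφv
  have hw₁ : ‖w‖ = 1 := hmin.norm_eq_one_of_inter_closedBall hwK hφw
  refine ⟨w, ⟨⟨hwK.1, hw₁⟩, fun x hx => hmin' ((hC x).2 hx)⟩, ?_⟩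
  rintro w' ⟨hw'C, hw'min⟩
  exact (hmin'.eq_of_inter_sphere (fun x hx => hw'min x ((hC x).1 hx)) ((hC w).2 ⟨hwK.1, hw₁⟩)
    ((hC w').2 hw'C) hφw).symm

/-- Existence and uniqueness of the minimizer of `w ↦ ⟨I'(u), w⟩`
over `C = {v | ⟨J'(u), v⟩ = 0 ∧ ‖v‖ = 1}` in a reflexive Banach space with a
strictly convex norm, provided `u ∈ S = {J = 1}` is not a critical point of
`I` with respect to `S`. -/
theorem stmt_0 {B : Type*} [NormedAddCommGroup B] [NormedSpace ℝ B] [CompleteSpace B]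
    (hrefl : Function.Surjective (NormedSpace.inclusionInDoubleDual ℝ B))
    (hconv : ∀ w₁ w₂ : B, w₁ ≠ w₂ → ‖w₁‖ = 1 → ‖w₂‖ = 1 → ‖(1 / 2 : ℝ) • (w₁ + w₂)‖ < 1)
    (I J : B → ℝ) (hI : ContDiff ℝ 1 I) (hJ : ContDiff ℝ 1 J)
    (u : B) (hu : J u = 1)
    (hcrit : ¬ ∃ α : ℝ, fderiv ℝ I u = α • fderiv ℝ J u) :
    ∃! w : B, (fderiv ℝ J u w = 0 ∧ ‖w‖ = 1) ∧
      ∀ v : B, (fderiv ℝ J u v = 0 ∧ ‖v‖ = 1) → fderiv ℝ I u w ≤ fderiv ℝ I u v :=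
  stmt_0_general hrefl hconv I J u hcrit
end

section
/- Let B be a reflexive real Banach space and let L, K be continuous linear functionals on B. Suppose the infimum of L over the set C := {v ∈ B | K(v) = 0, ‖v‖ = 1} is negative (in particular C is nonempty). Then this infimum is attained: there exists w ∈ C with L(w) = inf_{v ∈ C} L(v). -/
/-!
The set `C` is the unit sphere of the closed subspace `ker K`, which is again reflexive
(Hahn–Banach lets every functional on `ker K` extend to `B`, and separates points off `ker K`).
In a reflexive space the restriction `L'` of `L` attains its norm at a unit vector `u`, since a
norming functional on the dual is evaluation at some point. As `C` is symmetric,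
`L ≥ -‖L'‖` on `C` with equality at `-u`, so the infimum is a minimum.
-/

open NormedSpace

section Reflexive

variable {E : Type*} [NormedAddCommGroup E] [NormedSpace ℝ E]

theorem Submodule.exists_dual_apply_ne_zero_of_notMem {p : Submodule ℝ E}
    (hp : IsClosed (p : Set E)) {x : E} (hx : x ∉ p) :
    ∃ f : StrongDual ℝ E, f x ≠ 0 ∧ ∀ y ∈ p, f y = 0 := by
  have := hp
  obtain ⟨g, hg⟩ := SeparatingDual.exists_ne_zero (R := ℝ) (x := p.mkQL x)
    (by simpa [Submodule.Quotient.mk_eq_zero] using hx)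
  exact ⟨g.comp p.mkQL, hg, fun y hy => by simp [(Submodule.Quotient.mk_eq_zero p).mpr hy]⟩

theorem Submodule.surjective_inclusionInDoubleDual {p : Submodule ℝ E}
    (hp : IsClosed (p : Set E)) (hrefl : Function.Surjective (inclusionInDoubleDual ℝ E)) :
    Function.Surjective (inclusionInDoubleDual ℝ p) := by
  intro F
  -- `F` pulled back along the restriction map `E* → p*` is evaluation at some `x : E`.
  obtain ⟨x, hx⟩ := hrefl (F.comp ((ContinuousLinearMap.compL ℝ p E ℝ).flip p.subtypeL))
  have hxF (f : StrongDual ℝ E) : f x = F (f.comp p.subtypeL) := by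
    simpa using congrArg (fun G => G f) hx
  have hxp : x ∈ p := by
    by_contra hxp
    obtain ⟨f, hfx, hfp⟩ := p.exists_dual_apply_ne_zero_of_notMem hp hxp
    have hf0 : f.comp p.subtypeL = 0 := by ext y; exact hfp y y.2
    exact hfx (by rw [hxF, hf0, map_zero])
  refine ⟨⟨x, hxp⟩, ContinuousLinearMap.ext fun g => ?_⟩
  obtain ⟨g', hg', -⟩ := exists_extension_norm_eq p g
  have hg'g : g'.comp p.subtypeL = g := by ext y; exact hg' y
  rw [dual_def, ← hg'g, ← hxF]
  rfl

theorem exists_norm_eq_one_apply_eq_norm [Nontrivial E]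
    (hrefl : Function.Surjective (inclusionInDoubleDual ℝ E)) (f : StrongDual ℝ E) :
    ∃ u : E, ‖u‖ = 1 ∧ f u = ‖f‖ := by
  obtain ⟨Φ, hΦ, hΦf⟩ := exists_dual_vector' ℝ f
  obtain ⟨u, rfl⟩ := hrefl Φ
  exact ⟨u, by rw [← (inclusionInDoubleDualLi ℝ).norm_map u]; exact hΦ, hΦf⟩

theorem Submodule.exists_norm_eq_one_forall_le {p : Submodule ℝ E} (hp : IsClosed (p : Set E))
    (hrefl : Function.Surjective (inclusionInDoubleDual ℝ E)) (hne : ∃ v ∈ p, ‖v‖ = 1)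
    (f : StrongDual ℝ E) : ∃ w ∈ p, ‖w‖ = 1 ∧ ∀ v ∈ p, ‖v‖ = 1 → f w ≤ f v := by
  obtain ⟨v₀, hv₀p, hv₀⟩ := hne
  have : Nontrivial p := nontrivial_of_ne ⟨v₀, hv₀p⟩ 0 fun h => by simp_all
  set f' := f.comp p.subtypeL
  obtain ⟨u, hu, hf'u⟩ :=
    exists_norm_eq_one_apply_eq_norm (p.surjective_inclusionInDoubleDual hp hrefl) f'
  refine ⟨-u, p.neg_mem u.2, by simpa using hu, fun v hvp hv => ?_⟩
  calc f (-u) = -‖f'‖ := by rw [map_neg, ← hf'u]; rfl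
    _ ≤ f v := by
      have hbound := f'.le_opNorm ⟨v, hvp⟩
      rw [show ‖(⟨v, hvp⟩ : p)‖ = 1 from hv, mul_one] at hbound
      exact neg_le_of_abs_le hbound

end Reflexive

theorem stmt_2_general {B : Type*} [NormedAddCommGroup B] [NormedSpace ℝ B]
    (hrefl : Function.Surjective (NormedSpace.inclusionInDoubleDual ℝ B))
    (L K : B →L[ℝ] ℝ)
    (hne : {v : B | K v = 0 ∧ ‖v‖ = 1}.Nonempty) :
    ∃ w ∈ {v : B | K v = 0 ∧ ‖v‖ = 1},
      L w = sInf (L '' {v : B | K v = 0 ∧ ‖v‖ = 1}) := by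
  obtain ⟨w, hwK, hw, hmin⟩ :=
    (LinearMap.ker (K : B →ₗ[ℝ] ℝ)).exists_norm_eq_one_forall_le K.isClosed_ker hrefl hne L
  have hleast : IsLeast (L '' {v : B | K v = 0 ∧ ‖v‖ = 1}) (L w) :=
    ⟨⟨w, ⟨hwK, hw⟩, rfl⟩, by rintro _ ⟨v, ⟨hvK, hv⟩, rfl⟩; exact hmin v hvK hv⟩
  exact ⟨w, ⟨hwK, hw⟩, hleast.csInf_eq.symm⟩

/-- In a reflexive Banach space, if the infimum of a continuous
linear functional `L` over `C = {v | K v = 0 ∧ ‖v‖ = 1}` is negative, then it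
is attained. -/
theorem stmt_2 {B : Type*} [NormedAddCommGroup B] [NormedSpace ℝ B] [CompleteSpace B]
    (hrefl : Function.Surjective (NormedSpace.inclusionInDoubleDual ℝ B))
    (L K : B →L[ℝ] ℝ)
    (hne : {v : B | K v = 0 ∧ ‖v‖ = 1}.Nonempty)
    (hinf : sInf (L '' {v : B | K v = 0 ∧ ‖v‖ = 1}) < 0) :
    ∃ w ∈ {v : B | K v = 0 ∧ ‖v‖ = 1},
      L w = sInf (L '' {v : B | K v = 0 ∧ ‖v‖ = 1}) :=
  stmt_2_general hrefl L K hne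
end

section
/- Let B be a real normed vector space whose norm is strictly convex and let L, K be continuous linear functionals on B. Suppose w₁ and w₂ both minimize L over the set C := {v ∈ B | K(v) = 0, ‖v‖ = 1} and that the minimal value L(w₁) = L(w₂) is negative. Then w₁ = w₂. -/
/-- In a normed space with strictly convex norm, a minimizer of a
continuous linear functional `L` over `C = {v | K v = 0 ∧ ‖v‖ = 1}` with
negative minimal value is unique. -/
theorem stmt_3 {B : Type*} [NormedAddCommGroup B] [NormedSpace ℝ B]
    (hconv : ∀ w₁ w₂ : B, w₁ ≠ w₂ → ‖w₁‖ = 1 → ‖w₂‖ = 1 → ‖(1 / 2 : ℝ) • (w₁ + w₂)‖ < 1)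
    (L K : B →L[ℝ] ℝ) (w₁ w₂ : B)
    (hw₁ : K w₁ = 0 ∧ ‖w₁‖ = 1) (hw₂ : K w₂ = 0 ∧ ‖w₂‖ = 1)
    (hmin₁ : ∀ v : B, (K v = 0 ∧ ‖v‖ = 1) → L w₁ ≤ L v)
    (hmin₂ : ∀ v : B, (K v = 0 ∧ ‖v‖ = 1) → L w₂ ≤ L v)
    (hneg : L w₁ < 0) (heq : L w₁ = L w₂) :
    w₁ = w₂ := by
  by_contra hne
  set m : B := (1 / 2 : ℝ) • (w₁ + w₂) with hm
  have hLm : L m = L w₁ := by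
    simp [hm, map_smul, map_add, ← heq]; ring
  have hKm : K m = 0 := by
    simp [hm, map_smul, map_add, hw₁.1, hw₂.1]
  have hmlt : ‖m‖ < 1 := hconv w₁ w₂ hne hw₁.2 hw₂.2
  have hmpos : 0 < ‖m‖ := by
    rw [norm_pos_iff]
    intro h0
    rw [h0] at hLm
    simp at hLm
    exact absurd hLm.symm (ne_of_lt hneg)
  set v : B := (‖m‖)⁻¹ • m with hv
  have hvnorm : ‖v‖ = 1 := by
    rw [hv, norm_smul, norm_inv, norm_norm, inv_mul_cancel₀ hmpos.ne']
  have hKv : K v = 0 := by simp [hv, map_smul, hKm]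
  have hLv : L v = (‖m‖)⁻¹ * L w₁ := by simp [hv, map_smul, hLm]
  have : L w₁ ≤ L v := hmin₁ v ⟨hKv, hvnorm⟩
  rw [hLv] at this
  have hinv : 1 < (‖m‖)⁻¹ := (one_lt_inv₀ hmpos).mpr hmlt
  nlinarith
end

section
/- Let (X, μ) be a measure space, let E be a real inner product space, let p > 1, and let F, G : X → E be measurable functions with 0 < ∫_X |F|^p dμ < ∞ and ∫_X |G|^p dμ < ∞. Then equality ∫_X |F(x)|^{p-2} ⟨F(x), G(x)⟩ dμ(x) = (∫_X |F|^p dμ)^{(p-1)/p} · (∫_X |G|^p dμ)^{1/p} holds if and only if there exists ν ≥ 0 such that G = ν F μ-almost everywhere (the integrand |F(x)|^{p-2} ⟨F(x), G(x)⟩ being understood as 0 where F(x) = 0). -/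
/-!
Write `S = ∫ ‖F‖^p` and `T = ∫ ‖G‖^p`. Pointwise, Cauchy–Schwarz and the weighted AM–GM inequality
with weights `(p - 1) / p` and `1 / p` give
`‖F‖^(p-2) ⟪F, G⟫ ≤ ‖F‖^(p-1) ‖G‖ ≤ S^((p-1)/p) T^(1/p) ((p-1)/p ‖F‖^p / S + 1/p ‖G‖^p / T)`,
and the right-hand side integrates to `S^((p-1)/p) T^(1/p)`. Equality of the integrals therefore
forces equality almost everywhere in both steps: AM–GM then gives `‖G‖ = (T / S)^(1/p) ‖F‖`, and
Cauchy–Schwarz makes `G` a nonnegative multiple of `F`.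
-/

open MeasureTheory Real

section Rpow

variable {p a b : ℝ}

lemma rpow_sub_two_mul_self (ha : 0 ≤ a) (hp : p ≠ 1) : a ^ (p - 2) * a = a ^ (p - 1) := by
  rw [← rpow_add_one' ha (by contrapose! hp; linarith)]
  ring_nf

lemma rpow_rpow_sub_one_div_mul_rpow_rpow_one_div (hp : p ≠ 0) (ha : 0 ≤ a) (hb : 0 ≤ b) :
    (a ^ p) ^ ((p - 1) / p) * (b ^ p) ^ (1 / p) = a ^ (p - 1) * b := by
  rw [← rpow_mul ha, ← rpow_mul hb, mul_div_cancel₀ _ hp, mul_one_div_cancel hp, rpow_one]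

lemma eq_rpow_one_div_mul_of_rpow_div_eq_rpow_div (hp : p ≠ 0) (ha : 0 ≤ a) (hb : 0 ≤ b)
    {S T : ℝ} (hS : 0 < S) (hT : 0 < T) (h : a ^ p / S = b ^ p / T) :
    b = (T / S) ^ (1 / p) * a := by
  have hbp : b ^ p = T / S * a ^ p := by
    rw [div_eq_div_iff hS.ne' hT.ne'] at h
    field_simp
    linarith
  rw [← rpow_rpow_inv hb hp, hbp, mul_rpow (by positivity) (by positivity), rpow_rpow_inv ha hp,
    one_div]

end Rpow

section WeightedMeans

variable {w₁ w₂ s t S T : ℝ}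

lemma rpow_mul_rpow_eq_mul_rpow_div_mul_rpow_div (hs : 0 ≤ s) (ht : 0 ≤ t) (hS : 0 < S)
    (hT : 0 < T) :
    s ^ w₁ * t ^ w₂ = S ^ w₁ * T ^ w₂ * ((s / S) ^ w₁ * (t / T) ^ w₂) := by
  rw [div_rpow hs hS.le, div_rpow ht hT.le]
  field_simp

lemma rpow_mul_rpow_le_mul_arith_mean_div (hw₁ : 0 ≤ w₁) (hw₂ : 0 ≤ w₂) (hw : w₁ + w₂ = 1)
    (hs : 0 ≤ s) (ht : 0 ≤ t) (hS : 0 < S) (hT : 0 < T) :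
    s ^ w₁ * t ^ w₂ ≤ S ^ w₁ * T ^ w₂ * (w₁ * (s / S) + w₂ * (t / T)) := by
  rw [rpow_mul_rpow_eq_mul_rpow_div_mul_rpow_div hs ht hS hT]
  gcongr
  exact geom_mean_le_arith_mean2_weighted hw₁ hw₂ (by positivity) (by positivity) hw

lemma div_eq_div_of_rpow_mul_rpow_eq_mul_arith_mean_div (hw₁ : 0 < w₁) (hw₂ : 0 < w₂)
    (hw : w₁ + w₂ = 1) (hs : 0 ≤ s) (ht : 0 ≤ t) (hS : 0 < S) (hT : 0 < T)
    (h : s ^ w₁ * t ^ w₂ = S ^ w₁ * T ^ w₂ * (w₁ * (s / S) + w₂ * (t / T))) :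
    s / S = t / T := by
  rw [rpow_mul_rpow_eq_mul_rpow_div_mul_rpow_div hs ht hS hT] at h
  refine (geom_mean_eq_arith_mean2_weighted_iff_of_pos hw₁ hw₂ (by positivity) (by positivity)
    hw).1 (mul_left_cancel₀ ?_ h)
  positivity

end WeightedMeans

section InnerProductSpace

variable {E : Type*} [NormedAddCommGroup E] [InnerProductSpace ℝ E] {p : ℝ}

lemma rpow_sub_two_mul_inner_le (hp : p ≠ 1) (x y : E) :
    ‖x‖ ^ (p - 2) * inner ℝ x y ≤ ‖x‖ ^ (p - 1) * ‖y‖ := by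
  rw [← rpow_sub_two_mul_self (norm_nonneg x) hp, mul_assoc]
  gcongr
  exact real_inner_le_norm x y

lemma eq_smul_of_rpow_sub_two_mul_inner_eq {x y : E} {ν : ℝ}
    (h : ‖x‖ ^ (p - 2) * inner ℝ x y = ‖x‖ ^ (p - 1) * ‖y‖) (hy : ‖y‖ = ν * ‖x‖) :
    y = ν • x := by
  rcases eq_or_ne x 0 with rfl | hx
  · simpa using hy
  have hx' : 0 < ‖x‖ := norm_pos_iff.2 hx
  have hinner : inner ℝ x y = ‖x‖ * ‖y‖ := by
    rw [show p - 1 = p - 2 + 1 by ring, rpow_add_one hx'.ne', mul_assoc] at h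
    exact mul_left_cancel₀ (rpow_pos_of_pos hx' _).ne' h
  have hpar : ‖x‖ • (ν • x) = ‖x‖ • y := by
    rw [smul_smul, mul_comm, ← hy, ← inner_eq_norm_mul_iff_real.1 hinner]
  exact (smul_right_injective E hx'.ne' hpar).symm

end InnerProductSpace

section Holder

variable {X : Type*} [MeasurableSpace X] {μ : Measure X} {w₁ w₂ : ℝ} {f g h : X → ℝ}

theorem ae_eq_and_div_integral_eq_of_integral_eq_rpow_mul_rpow (hw₁ : 0 < w₁) (hw₂ : 0 < w₂)
    (hw : w₁ + w₂ = 1) (hf : 0 ≤ᵐ[μ] f) (hg : 0 ≤ᵐ[μ] g) (hfi : Integrable f μ)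
    (hgi : Integrable g μ) (hfpos : 0 < ∫ x, f x ∂μ) (hgpos : 0 < ∫ x, g x ∂μ)
    (hh : ∀ᵐ x ∂μ, h x ≤ f x ^ w₁ * g x ^ w₂)
    (heq : ∫ x, h x ∂μ = (∫ x, f x ∂μ) ^ w₁ * (∫ x, g x ∂μ) ^ w₂) :
    ∀ᵐ x ∂μ, h x = f x ^ w₁ * g x ^ w₂ ∧ f x / ∫ x, f x ∂μ = g x / ∫ x, g x ∂μ := by
  set S := ∫ x, f x ∂μ
  set T := ∫ x, g x ∂μ
  have hK : 0 < S ^ w₁ * T ^ w₂ := by positivity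
  set J : X → ℝ := fun x => S ^ w₁ * T ^ w₂ * (w₁ * (f x / S) + w₂ * (g x / T))
  have hJi : Integrable J μ :=
    ((hfi.div_const S).const_mul w₁ |>.add ((hgi.div_const T).const_mul w₂)).const_mul _
  have hJ : ∫ x, J x ∂μ = S ^ w₁ * T ^ w₂ := by
    simp only [J, integral_const_mul, integral_add ((hfi.div_const S).const_mul w₁)
      ((hgi.div_const T).const_mul w₂), integral_div]
    rw [div_self hfpos.ne', div_self hgpos.ne', mul_one, mul_one, hw, mul_one]
  -- the integral of a non-integrable function is `0`
  have hhi : Integrable h μ := by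
    by_contra hni
    rw [integral_undef hni] at heq
    exact hK.ne' heq.symm
  have hmean : ∀ᵐ x ∂μ, f x ^ w₁ * g x ^ w₂ ≤ J x := by
    filter_upwards [hf, hg] with x hfx hgx
    exact rpow_mul_rpow_le_mul_arith_mean_div hw₁.le hw₂.le hw hfx hgx hfpos hgpos
  have hhJ : h =ᵐ[μ] J :=
    (integral_eq_iff_of_ae_le hhi hJi (hh.mp (hmean.mono fun x h₁ h₂ => h₂.trans h₁))).1
      (heq.trans hJ.symm)
  filter_upwards [hf, hg, hh, hmean, hhJ] with x hfx hgx hhx hmx hJx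
  have hgeom : f x ^ w₁ * g x ^ w₂ = J x := le_antisymm hmx (hJx ▸ hhx)
  exact ⟨hJx.trans hgeom.symm,
    div_eq_div_of_rpow_mul_rpow_eq_mul_arith_mean_div hw₁ hw₂ hw hfx hgx hfpos hgpos hgeom⟩

end Holder

section Lp

variable {X : Type*} [MeasurableSpace X] {μ : Measure X}
  {E : Type*} [NormedAddCommGroup E] {p : ℝ} {F G : X → E}

lemma ae_eq_zero_of_integral_norm_rpow_eq_zero (hp : p ≠ 0)
    (hG : Integrable (fun x => ‖G x‖ ^ p) μ) (h : ∫ x, ‖G x‖ ^ p ∂μ = 0) : G =ᵐ[μ] 0 := by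
  filter_upwards [(integral_eq_zero_iff_of_nonneg (fun x => by positivity) hG).1 h] with x hx
  simpa [rpow_eq_zero (norm_nonneg _) hp] using hx

variable [InnerProductSpace ℝ E]

lemma integral_rpow_sub_two_mul_inner_smul_self (hp : p ≠ 0) {ν : ℝ} (hν : 0 ≤ ν) :
    ∫ x, ‖F x‖ ^ (p - 2) * inner ℝ (F x) (ν • F x) ∂μ =
      (∫ x, ‖F x‖ ^ p ∂μ) ^ ((p - 1) / p) * (∫ x, ‖ν • F x‖ ^ p ∂μ) ^ (1 / p) := by
  have hpow (x : X) : ‖F x‖ ^ (p - 2) * inner ℝ (F x) (ν • F x) = ν * ‖F x‖ ^ p := by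
    rw [real_inner_smul_right, real_inner_self_eq_norm_sq, ← rpow_two, mul_left_comm,
      ← rpow_add' (norm_nonneg _) (by simpa using hp), sub_add_cancel]
  have hexp : (p - 1) / p + 1 / p = 1 := by field_simp; ring
  have hS : 0 ≤ ∫ x, ‖F x‖ ^ p ∂μ := integral_nonneg fun x => by positivity
  simp only [hpow, norm_smul, norm_of_nonneg hν, mul_rpow hν (norm_nonneg _), integral_const_mul]
  rw [mul_rpow (by positivity) hS, ← rpow_mul hν, mul_one_div_cancel hp, rpow_one,
    mul_left_comm, ← rpow_add' hS (by rw [hexp]; exact one_ne_zero), hexp, rpow_one]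

lemma ae_eq_smul_of_integral_rpow_sub_two_mul_inner_eq (hp : 1 < p)
    (hF : Integrable (fun x => ‖F x‖ ^ p) μ) (hG : Integrable (fun x => ‖G x‖ ^ p) μ)
    (hFpos : 0 < ∫ x, ‖F x‖ ^ p ∂μ) (hGpos : 0 < ∫ x, ‖G x‖ ^ p ∂μ)
    (heq : ∫ x, ‖F x‖ ^ (p - 2) * inner ℝ (F x) (G x) ∂μ =
        (∫ x, ‖F x‖ ^ p ∂μ) ^ ((p - 1) / p) * (∫ x, ‖G x‖ ^ p ∂μ) ^ (1 / p)) :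
    ∀ᵐ x ∂μ, G x = (((∫ x, ‖G x‖ ^ p ∂μ) / ∫ x, ‖F x‖ ^ p ∂μ) ^ (1 / p)) • F x := by
  have hp0 : p ≠ 0 := (zero_lt_one.trans hp).ne'
  have hnorm (x : X) := rpow_rpow_sub_one_div_mul_rpow_rpow_one_div hp0 (norm_nonneg (F x))
    (norm_nonneg (G x))
  have hae := ae_eq_and_div_integral_eq_of_integral_eq_rpow_mul_rpow
    (by have := sub_pos.2 hp; positivity) (by positivity) (by field_simp; ring)
    (ae_of_all _ fun x => by positivity) (ae_of_all _ fun x => by positivity) hF hG hFpos hGpos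
    (ae_of_all _ fun x => hnorm x ▸ rpow_sub_two_mul_inner_le hp.ne' (F x) (G x)) heq
  filter_upwards [hae] with x ⟨hinner, hdiv⟩
  exact eq_smul_of_rpow_sub_two_mul_inner_eq (hnorm x ▸ hinner)
    (eq_rpow_one_div_mul_of_rpow_div_eq_rpow_div hp0 (norm_nonneg _) (norm_nonneg _) hFpos
      hGpos hdiv)

end Lp

theorem stmt_5_general {X : Type*} [MeasurableSpace X] (μ : Measure X)
    {E : Type*} [NormedAddCommGroup E] [InnerProductSpace ℝ E]
    (p : ℝ) (hp : 1 < p) (F G : X → E)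
    (hF : Integrable (fun x => ‖F x‖ ^ p) μ)
    (hFpos : 0 < ∫ x, ‖F x‖ ^ p ∂μ)
    (hG : Integrable (fun x => ‖G x‖ ^ p) μ) :
    (∫ x, ‖F x‖ ^ (p - 2) * (inner ℝ (F x) (G x) : ℝ) ∂μ =
        (∫ x, ‖F x‖ ^ p ∂μ) ^ ((p - 1) / p) * (∫ x, ‖G x‖ ^ p ∂μ) ^ (1 / p)) ↔
      ∃ ν : ℝ, 0 ≤ ν ∧ ∀ᵐ x ∂μ, G x = ν • F x := by
  have hp0 : p ≠ 0 := (zero_lt_one.trans hp).ne'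
  constructor
  · intro heq
    rcases (integral_nonneg fun x => by positivity : 0 ≤ ∫ x, ‖G x‖ ^ p ∂μ).eq_or_lt
      with hGzero | hGpos
    · refine ⟨0, le_rfl, ?_⟩
      filter_upwards [ae_eq_zero_of_integral_norm_rpow_eq_zero hp0 hG hGzero.symm] with x hx
      simp [hx]
    exact ⟨_, by positivity,
      ae_eq_smul_of_integral_rpow_sub_two_mul_inner_eq hp hF hG hFpos hGpos heq⟩
  · rintro ⟨ν, hν, hGF⟩
    calc _ = ∫ x, ‖F x‖ ^ (p - 2) * inner ℝ (F x) (ν • F x) ∂μ :=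
          integral_congr_ae (hGF.mono fun x hx => by rw [hx])
      _ = _ := integral_rpow_sub_two_mul_inner_smul_self hp0 hν
      _ = _ := by
        rw [integral_congr_ae (hGF.mono fun x hx => by rw [hx] :
          ∀ᵐ x ∂μ, ‖G x‖ ^ p = ‖ν • F x‖ ^ p)]

/-- Equality case of the auxiliary Hölder/Cauchy–Schwarz
inequality: equality holds iff `G = ν F` μ-a.e. for some `ν ≥ 0`. -/
theorem stmt_5 {X : Type*} [MeasurableSpace X] (μ : Measure X)
    {E : Type*} [NormedAddCommGroup E] [InnerProductSpace ℝ E]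
    [MeasurableSpace E] [BorelSpace E]
    (p : ℝ) (hp : 1 < p) (F G : X → E)
    (hFm : Measurable F) (hGm : Measurable G)
    (hF : Integrable (fun x => ‖F x‖ ^ p) μ)
    (hFpos : 0 < ∫ x, ‖F x‖ ^ p ∂μ)
    (hG : Integrable (fun x => ‖G x‖ ^ p) μ) :
    (∫ x, ‖F x‖ ^ (p - 2) * (inner ℝ (F x) (G x) : ℝ) ∂μ =
        (∫ x, ‖F x‖ ^ p ∂μ) ^ ((p - 1) / p) * (∫ x, ‖G x‖ ^ p ∂μ) ^ (1 / p)) ↔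
      ∃ ν : ℝ, 0 ≤ ν ∧ ∀ᵐ x ∂μ, G x = ν • F x :=
  stmt_5_general μ p hp F G hF hFpos hG
end

section
/- Let A, B, C be three points in ℝ² that are affinely independent, let T be the interior of their convex hull, and let |T| denote the two-dimensional Lebesgue measure of T. Let u : ℝ² → ℝ be an affine function and write u_A = u(A), u_B = u(B), u_C = u(C). If u_A, u_B, u_C are mutually distinct, then for every real p ≥ 1, ∫_T |u(x)|^p dx = (2|T| / ((p+1)(p+2)(u_C − u_A))) · ( (|u_C|^{p+2} − |u_B|^{p+2})/(u_C − u_B) − (|u_A|^{p+2} − |u_B|^{p+2})/(u_A − u_B) ). -/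
/-!
In the barycentric coordinates `(s, t) = (λ_B, λ_C)` of the triangle `ABC`, an affine `u` reads
`u_A + (u_B - u_A) s + (u_C - u_A) t`, and the triangle is the preimage of the standard triangle
`Δ = {0 < s, 0 < t, s + t < 1}`. The coordinate map is an affine bijection, so by uniqueness of
Haar measure it pushes Lebesgue measure to `κ • volume` for some `κ`: thus
`∫_T g ∘ u = κ ∫_Δ g (u_A + (u_B - u_A) s + (u_C - u_A) t)` and `|T| = κ |Δ| = κ / 2`.
Integrating over `Δ` first in `t`, then in `s`, against an antiderivative `G` with `G'' = g` gives
the Hermite–Genocchi formula: the integral over `Δ` is the divided difference `G[u_A, u_B, u_C]`.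
For `g = |·| ^ p` take `G = |·| ^ (p + 2) / ((p + 1) (p + 2))`.
-/

open MeasureTheory Set

theorem hasDerivAt_abs_rpow_mul_self {p : ℝ} (hp : 0 < p) (x : ℝ) :
    HasDerivAt (fun y : ℝ => |y| ^ p * y) ((p + 1) * |x| ^ p) x := by
  rcases eq_or_ne x 0 with rfl | hx
  · -- the difference quotient at `0` is `|y| ^ p`, which tends to `0`
    rw [hasDerivAt_iff_tendsto_slope]
    have hcont : ContinuousAt (fun y : ℝ => |y| ^ p) 0 :=
      (continuous_abs.rpow_const fun _ => Or.inr hp.le).continuousAt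
    have hlim := hcont.tendsto.mono_left (nhdsWithin_le_nhds (s := {(0 : ℝ)}ᶜ))
    simp only [abs_zero, Real.zero_rpow hp.ne', mul_zero] at hlim ⊢
    refine hlim.congr' (eventually_nhdsWithin_of_forall fun y (hy : y ≠ 0) => ?_)
    simp [slope_def_field, hy]
  · have habs : HasDerivAt (fun y : ℝ => |y| ^ p) (SignType.sign x * p * |x| ^ (p - 1)) x :=
      (hasDerivAt_abs hx).rpow_const (Or.inl (abs_ne_zero.mpr hx))
    refine (habs.mul (hasDerivAt_id x)).congr_deriv ?_
    have hsign : (SignType.sign x : ℝ) * x = |x| := by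
      rcases hx.lt_or_gt with h | h <;> simp [h, abs_of_neg, abs_of_pos]
    rw [Real.rpow_sub_one (abs_ne_zero.mpr hx), id]
    field_simp
    linear_combination p * hsign

theorem intervalIntegral.integral_comp_add_mul_of_hasDerivAt {H h : ℝ → ℝ}
    (hH : ∀ x, HasDerivAt H (h x) x) (hh : Continuous h) (α : ℝ) {β : ℝ} (hβ : β ≠ 0)
    (x₀ x₁ : ℝ) :
    ∫ t in x₀..x₁, h (α + β * t) = (H (α + β * x₁) - H (α + β * x₀)) / β := by
  rw [intervalIntegral.integral_comp_add_mul _ hβ,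
    intervalIntegral.integral_eq_sub_of_hasDerivAt (fun x _ => hH x) (hh.intervalIntegrable _ _),
    smul_eq_mul, inv_mul_eq_div]

theorem setIntegral_regionBetween {α E : Type*} [MeasurableSpace α] {μ : Measure α} [SFinite μ]
    [NormedAddCommGroup E] [NormedSpace ℝ E] {f g : α → ℝ} {s : Set α}
    (hf : Measurable f) (hg : Measurable g) (hs : MeasurableSet s) {F : α × ℝ → E}
    (hF : IntegrableOn F (regionBetween f g s) (μ.prod volume)) :
    ∫ z in regionBetween f g s, F z ∂μ.prod volume =
      ∫ x in s, (∫ y in Ioo (f x) (g x), F (x, y)) ∂μ := by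
  have hmeas := measurableSet_regionBetween hf hg hs
  rw [← integral_indicator hmeas, integral_prod _ ((integrable_indicator_iff hmeas).2 hF),
    ← integral_indicator hs]
  congr 1 with x
  by_cases hx : x ∈ s
  · rw [indicator_of_mem hx, ← integral_indicator measurableSet_Ioo]
    congr 1 with y
    simp only [indicator, regionBetween, mem_ofPred_eq, hx, true_and]
  · rw [indicator_of_notMem hx]
    simp [indicator, regionBetween, hx]

def stdTriangle : Set (ℝ × ℝ) := regionBetween (fun _ => 0) (fun s => 1 - s) (Ioo 0 1)

theorem stdTriangle_subset_Icc : stdTriangle ⊆ Icc 0 1 := by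
  rintro ⟨s, t⟩ ⟨⟨hs₀, hs₁⟩, ht₀, ht₁⟩
  dsimp only at *
  exact ⟨⟨hs₀.le, ht₀.le⟩, hs₁.le, show t ≤ 1 by linarith⟩

theorem setIntegral_stdTriangle_comp_affine {G G' g : ℝ → ℝ} (hG : ∀ x, HasDerivAt G (G' x) x)
    (hG' : ∀ x, HasDerivAt G' (g x) x) (hg : Continuous g) {a b c : ℝ}
    (hab : a ≠ b) (hbc : b ≠ c) (hac : a ≠ c) :
    ∫ q in stdTriangle, g (a + (b - a) * q.1 + (c - a) * q.2) =
      (slope G b c - slope G a b) / (c - a) := by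
  have hG'_cont : Continuous G' := continuous_iff_continuousAt.2 fun x => (hG' x).continuousAt
  have hintegrable : IntegrableOn (fun q : ℝ × ℝ => g (a + (b - a) * q.1 + (c - a) * q.2))
      stdTriangle (volume.prod volume) :=
    ((by fun_prop : Continuous fun q : ℝ × ℝ => g (a + (b - a) * q.1 + (c - a) * q.2))
      |>.integrableOn_Icc).mono_set stdTriangle_subset_Icc
  have hinner : EqOn (fun s => ∫ t in Ioo 0 (1 - s), g (a + (b - a) * s + (c - a) * t))
      (fun s => (G' (c + (b - c) * s) - G' (a + (b - a) * s)) / (c - a)) (Ioo 0 1) := by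
    intro s hs
    dsimp only
    rw [← integral_Ioc_eq_integral_Ioo, ← intervalIntegral.integral_of_le (by linarith [hs.2]),
      intervalIntegral.integral_comp_add_mul_of_hasDerivAt hG' hg _ (sub_ne_zero.2 hac.symm)]
    ring_nf
  rw [Measure.volume_eq_prod, stdTriangle,
    setIntegral_regionBetween measurable_const (by fun_prop) measurableSet_Ioo hintegrable,
    setIntegral_congr_fun measurableSet_Ioo hinner, ← integral_Ioc_eq_integral_Ioo,
    ← intervalIntegral.integral_of_le zero_le_one, intervalIntegral.integral_div,
    intervalIntegral.integral_sub ((by fun_prop : Continuous _).intervalIntegrable _ _)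
      ((by fun_prop : Continuous _).intervalIntegrable _ _),
    intervalIntegral.integral_comp_add_mul_of_hasDerivAt hG hG'_cont _ (sub_ne_zero.2 hbc),
    intervalIntegral.integral_comp_add_mul_of_hasDerivAt hG hG'_cont _ (sub_ne_zero.2 hab.symm)]
  simp only [slope_def_field, mul_one, mul_zero, add_zero, add_sub_cancel]
  field_simp
  ring

theorem measureReal_stdTriangle : volume.real stdTriangle = 1 / 2 := by
  have h := setIntegral_stdTriangle_comp_affine (G := fun x => x ^ 2 / 2) (g := fun _ => 1)
    (fun x => by simpa using (hasDerivAt_pow 2 x).div_const 2) hasDerivAt_id continuous_const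
    (a := 0) (b := 1) (c := 2) (by norm_num) (by norm_num) (by norm_num)
  rw [setIntegral_const, smul_eq_mul, mul_one] at h
  rw [h]
  norm_num [slope_def_field]

theorem AffineMap.exists_map_eq_smul_addHaar {E F : Type*}
    [NormedAddCommGroup E] [NormedSpace ℝ E] [MeasurableSpace E] [BorelSpace E]
    [FiniteDimensional ℝ E]
    [NormedAddCommGroup F] [NormedSpace ℝ F] [MeasurableSpace F] [BorelSpace F]
    [FiniteDimensional ℝ F]
    (ρ : E →ᵃ[ℝ] F) (hρ : Function.Bijective ρ) (μ : Measure E) [μ.IsAddHaarMeasure]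
    (ν : Measure F) [ν.IsAddHaarMeasure] :
    ∃ κ : NNReal, μ.map ρ = κ • ν := by
  let L : E ≃L[ℝ] F :=
    (LinearEquiv.ofBijective ρ.linear (ρ.linear_bijective_iff.2 hρ)).toContinuousLinearEquiv
  have hρL : ⇑ρ = (· + ρ 0) ∘ L := ρ.decomp
  have : (μ.map L).IsAddHaarMeasure := L.isAddHaarMeasure_map μ
  rw [hρL, ← Measure.map_map (measurable_add_const _) L.continuous.measurable,
    map_add_right_eq_self]
  exact ⟨_, Measure.isAddLeftInvariant_eq_smul _ _⟩

namespace AffineBasis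

variable {E : Type*} [NormedAddCommGroup E] [NormedSpace ℝ E] (b : AffineBasis (Fin 3) ℝ E)

noncomputable def coord₁₂ : E →ᵃ[ℝ] ℝ × ℝ := (b.coord 1).prod (b.coord 2)

theorem coord_zero_eq (x : E) : b.coord 0 x = 1 - b.coord 1 x - b.coord 2 x := by
  linarith [b.sum_coord_apply_eq_one x, Fin.sum_univ_three fun i => b.coord i x]

theorem coord₁₂_bijective : Function.Bijective b.coord₁₂ := by
  refine ⟨fun x y hxy => b.ext_elem fun i => ?_, fun q => ?_⟩
  · simp only [coord₁₂, AffineMap.prod_apply, Prod.mk.injEq] at hxy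
    fin_cases i
    · simp [coord_zero_eq, hxy.1, hxy.2]
    · exact hxy.1
    · exact hxy.2
  · have hw : ∑ i ∈ Finset.univ, ![1 - q.1 - q.2, q.1, q.2] i = 1 := by
      simp [Fin.sum_univ_three]
      ring
    refine ⟨Finset.univ.affineCombination ℝ b ![1 - q.1 - q.2, q.1, q.2], ?_⟩
    simp [coord₁₂, b.coord_apply_combination_of_mem (Finset.mem_univ _) hw]

theorem interior_convexHull_eq_preimage_coord₁₂ :
    interior (convexHull ℝ (range b)) = b.coord₁₂ ⁻¹' stdTriangle := by
  ext x
  simp only [b.interior_convexHull, Fin.forall_fin_succ, IsEmpty.forall_iff, and_true,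
    coord_zero_eq, stdTriangle, regionBetween, coord₁₂, mem_ofPred_eq, mem_preimage,
    AffineMap.prod_apply, mem_Ioo, Fin.succ_zero_eq_one, Fin.succ_one_eq_two]
  constructor
  · rintro ⟨h₀, h₁, h₂⟩
    exact ⟨⟨h₁, by linarith⟩, h₂, by linarith⟩
  · rintro ⟨⟨h₁, -⟩, h₂, h₃⟩
    exact ⟨by linarith, h₁, h₂⟩

theorem affineMap_apply_eq_add_coord (u : E →ᵃ[ℝ] ℝ) (x : E) :
    u x = u (b 0) + (u (b 1) - u (b 0)) * b.coord 1 x + (u (b 2) - u (b 0)) * b.coord 2 x := by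
  have hw := b.sum_coord_apply_eq_one x
  conv_lhs => rw [← b.affineCombination_coord_eq_self x]
  rw [Finset.univ.map_affineCombination b _ hw,
    Finset.affineCombination_eq_linear_combination _ _ _ hw, Fin.sum_univ_three, coord_zero_eq]
  simp only [Function.comp_apply, smul_eq_mul]
  ring

end AffineBasis

theorem setIntegral_interior_convexHull_comp_affineMap {E : Type*} [NormedAddCommGroup E]
    [NormedSpace ℝ E] [MeasurableSpace E] [BorelSpace E] [FiniteDimensional ℝ E]
    (hE : Module.finrank ℝ E = 2) (μ : Measure E) [μ.IsAddHaarMeasure] {A B C : E}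
    (hind : AffineIndependent ℝ ![A, B, C]) (u : E →ᵃ[ℝ] ℝ)
    (hAB : u A ≠ u B) (hBC : u B ≠ u C) (hAC : u A ≠ u C) {G G' g : ℝ → ℝ}
    (hG : ∀ x, HasDerivAt G (G' x) x) (hG' : ∀ x, HasDerivAt G' (g x) x) (hg : Continuous g) :
    ∫ x in interior (convexHull ℝ {A, B, C}), g (u x) ∂μ =
      2 * μ.real (interior (convexHull ℝ {A, B, C})) *
        ((slope G (u B) (u C) - slope G (u A) (u B)) / (u C - u A)) := by
  let b : AffineBasis (Fin 3) ℝ E :=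
    ⟨![A, B, C], hind, hind.affineSpan_eq_top_iff_card_eq_finrank_add_one.2 (by simp [hE])⟩
  have hT : interior (convexHull ℝ {A, B, C}) = b.coord₁₂ ⁻¹' stdTriangle := by
    have hrange : range b = {A, B, C} := by
      change range ![A, B, C] = _
      rw [Matrix.range_cons, Matrix.range_cons, Matrix.range_cons_empty, singleton_union,
        singleton_union]
    rw [← hrange, b.interior_convexHull_eq_preimage_coord₁₂]
  obtain ⟨κ, hκ⟩ := b.coord₁₂.exists_map_eq_smul_addHaar b.coord₁₂_bijective μ volume
  have hmeas : MeasurableSet stdTriangle :=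
    measurableSet_regionBetween measurable_const (by fun_prop) measurableSet_Ioo
  have hcoord₁₂ : Measurable b.coord₁₂ := b.coord₁₂.continuous_of_finiteDimensional.measurable
  have hintegral : ∫ x in interior (convexHull ℝ {A, B, C}), g (u x) ∂μ =
      κ * ∫ q in stdTriangle, g (u A + (u B - u A) * q.1 + (u C - u A) * q.2) := by
    have hu (x : E) :
        u x = u A + (u B - u A) * (b.coord₁₂ x).1 + (u C - u A) * (b.coord₁₂ x).2 :=
      b.affineMap_apply_eq_add_coord u x
    rw [hT, setIntegral_congr_fun (hmeas.preimage hcoord₁₂) fun x _ => congrArg g (hu x)]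
    have hF : Continuous fun q : ℝ × ℝ => g (u A + (u B - u A) * q.1 + (u C - u A) * q.2) := by
      fun_prop
    rw [← setIntegral_map hmeas hF.aestronglyMeasurable hcoord₁₂.aemeasurable, hκ,
      Measure.restrict_smul, integral_smul_nnreal_measure, NNReal.smul_def, smul_eq_mul]
  have hvol : μ.real (interior (convexHull ℝ {A, B, C})) = κ * (1 / 2) := by
    rw [hT, ← map_measureReal_apply hcoord₁₂ hmeas, hκ, measureReal_nnreal_smul_apply,
      measureReal_stdTriangle]
  rw [hintegral, hvol, setIntegral_stdTriangle_comp_affine hG hG' hg hAB hBC hAC]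
  ring

/-- Closed-form formula for `∫_T |u|^p` where `T` is an open
triangle in `ℝ²` and `u` is an affine function with mutually distinct values
`u A`, `u B`, `u C` at the vertices. -/
theorem stmt_6 (A B C : EuclideanSpace ℝ (Fin 2))
    (hind : AffineIndependent ℝ ![A, B, C])
    (u : EuclideanSpace ℝ (Fin 2) → ℝ)
    (l : EuclideanSpace ℝ (Fin 2) →ₗ[ℝ] ℝ) (c : ℝ) (hu : ∀ x, u x = l x + c)
    (hAB : u A ≠ u B) (hBC : u B ≠ u C) (hAC : u A ≠ u C)
    (p : ℝ) (hp : 1 ≤ p) :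
    ∫ x in interior (convexHull ℝ {A, B, C}), |u x| ^ p =
      2 * (volume (interior (convexHull ℝ ({A, B, C} : Set (EuclideanSpace ℝ (Fin 2)))))).toReal /
          ((p + 1) * (p + 2) * (u C - u A)) *
        ((|u C| ^ (p + 2) - |u B| ^ (p + 2)) / (u C - u B) -
          (|u A| ^ (p + 2) - |u B| ^ (p + 2)) / (u A - u B)) := by
  have hp₀ : 0 < p := by linarith
  let uₐ : EuclideanSpace ℝ (Fin 2) →ᵃ[ℝ] ℝ := l.toAffineMap + AffineMap.const ℝ _ c
  have huₐ : ⇑uₐ = u := funext fun x => (hu x).symm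
  have hG (x : ℝ) : HasDerivAt (fun y => |y| ^ (p + 2) / ((p + 1) * (p + 2)))
      (|x| ^ p * x / (p + 1)) x :=
    ((hasDerivAt_abs_rpow x (by linarith)).div_const _).congr_deriv (by
      rw [add_sub_cancel_right]; field_simp)
  have hG' (x : ℝ) : HasDerivAt (fun y => |y| ^ p * y / (p + 1)) (|x| ^ p) x :=
    ((hasDerivAt_abs_rpow_mul_self hp₀ x).div_const _).congr_deriv (by field_simp)
  have h := setIntegral_interior_convexHull_comp_affineMap finrank_euclideanSpace_fin volume
    hind uₐ (huₐ ▸ hAB) (huₐ ▸ hBC) (huₐ ▸ hAC) hG hG'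
    (continuous_abs.rpow_const fun _ => Or.inr hp₀.le)
  rw [huₐ] at h
  rw [h, measureReal_def, slope_def_field, slope_def_field]
  field_simp
  ring
end

section
/- Let T ⊂ ℝ² be the interior of the convex hull of the three points (0,−1/2), (0,1/2), (3/4,0) (an isosceles triangle with base 1 and height 3/4). Then the supremum of all radii r > 0 such that there exist two disjoint open Euclidean balls of radius r both contained in T equals 3/(2(5 + √13)). -/
/-!
A ball of radius `r` lies in the open triangle iff its centre lies at distance at least `r` from
each of the three edge lines `x = 0`, `2x ± 3y = 3/2`, i.e. in the homothetic triangle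
`r ≤ x, 2x ± 3y ≤ 3/2 - √13 r`. The base is the longest side of that triangle, so two admissible
centres are at most `2(3/2 - √13 r - 2r)/3` apart, while disjointness of the balls needs distance
at least `2r`. Hence `r ≤ 3/(2(5 + √13))`, with equality for the centres `(r, ±r)`.
-/

/-- The point of the Euclidean plane `ℝ²` with coordinates `a`, `b`. -/
noncomputable def pt (a b : ℝ) : EuclideanSpace ℝ (Fin 2) := WithLp.toLp 2 ![a, b]

open Metric Set Real
open scoped RealInnerProductSpace

section HalfSpace

variable {E : Type*} [NormedAddCommGroup E] [InnerProductSpace ℝ E]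

theorem inner_add_mul_norm_le_of_ball_subset {u x : E} {r c : ℝ} (hr : 0 < r)
    (h : ball x r ⊆ {p | ⟪u, p⟫ ≤ c}) : ⟪u, x⟫ + r * ‖u‖ ≤ c := by
  have hclosed : closedBall x r ⊆ {p | ⟪u, p⟫ ≤ c} := by
    rw [← closure_ball x hr.ne']
    exact closure_minimal h (isClosed_le (continuous_const.inner continuous_id) continuous_const)
  have hmem : x + (r / ‖u‖) • u ∈ closedBall x r := by
    rw [mem_closedBall, dist_self_add_left, norm_smul, Real.norm_of_nonneg (by positivity)]
    rcases eq_or_ne ‖u‖ 0 with hu | hu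
    · simp [hu, hr.le]
    · rw [div_mul_cancel₀ r hu]
  have hval : ⟪u, x + (r / ‖u‖) • u⟫ = ⟪u, x⟫ + r * ‖u‖ := by
    rw [inner_add_right, real_inner_smul_right, real_inner_self_eq_norm_sq]
    rcases eq_or_ne ‖u‖ 0 with hu | hu
    · simp [hu]
    · field_simp
  simpa [hval] using hclosed hmem

theorem ball_subset_inner_lt {u x : E} {r c : ℝ} (hu : u ≠ 0) (h : ⟪u, x⟫ + r * ‖u‖ ≤ c) :
    ball x r ⊆ {p | ⟪u, p⟫ < c} := by
  intro p hp
  have hCS : ⟪u, p - x⟫ ≤ ‖u‖ * ‖p - x‖ := real_inner_le_norm _ _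
  have hlt : ‖u‖ * ‖p - x‖ < ‖u‖ * r :=
    mul_lt_mul_of_pos_left (mem_ball_iff_norm.mp hp) (norm_pos_iff.2 hu)
  rw [inner_sub_right] at hCS
  simp only [mem_ofPred_eq]
  linarith

end HalfSpace

@[simp]
theorem pt_apply_zero (a b : ℝ) : pt a b 0 = a := rfl

@[simp]
theorem pt_apply_one (a b : ℝ) : pt a b 1 = b := rfl

theorem inner_pt (a b : ℝ) (p : EuclideanSpace ℝ (Fin 2)) :
    ⟪pt a b, p⟫ = a * p 0 + b * p 1 := by
  simp [pt, PiLp.inner_apply, Fin.sum_univ_two, mul_comm]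

theorem norm_pt (a b : ℝ) : ‖pt a b‖ = √(a ^ 2 + b ^ 2) := by
  simp [pt, EuclideanSpace.norm_eq, Fin.sum_univ_two]

theorem dist_pt (a b a' b' : ℝ) : dist (pt a b) (pt a' b') = √((a - a') ^ 2 + (b - b') ^ 2) := by
  simp [pt, EuclideanSpace.dist_eq, Fin.sum_univ_two, Real.dist_eq]

theorem pt_ne_zero {a : ℝ} (b : ℝ) (ha : a ≠ 0) : pt a b ≠ 0 :=
  fun h => ha (by simpa using congrArg (· 0) h)

noncomputable def triangleVertices : Set (EuclideanSpace ℝ (Fin 2)) :=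
  {pt 0 (-(1 / 2)), pt 0 (1 / 2), pt (3 / 4) 0}

def isoscelesTriangle (r c : ℝ) : Set (EuclideanSpace ℝ (Fin 2)) :=
  {x | r ≤ x 0 ∧ 2 * x 0 + 3 * x 1 ≤ c ∧ 2 * x 0 - 3 * x 1 ≤ c}

theorem isoscelesTriangle_eq_inter (r c : ℝ) :
    isoscelesTriangle r c =
      {p | ⟪pt (-1) 0, p⟫ ≤ -r} ∩ {p | ⟪pt 2 3, p⟫ ≤ c} ∩ {p | ⟪pt 2 (-3), p⟫ ≤ c} := by
  ext p
  simp only [isoscelesTriangle, mem_inter_iff, mem_ofPred_eq, inner_pt]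
  constructor
  · rintro ⟨h₀, h₁, h₂⟩
    exact ⟨⟨by linarith, by linarith⟩, by linarith⟩
  · rintro ⟨⟨h₀, h₁⟩, h₂⟩
    exact ⟨by linarith, by linarith, by linarith⟩

theorem convex_isoscelesTriangle (r c : ℝ) : Convex ℝ (isoscelesTriangle r c) := by
  have hconv (u : EuclideanSpace ℝ (Fin 2)) (c : ℝ) : Convex ℝ {p | ⟪u, p⟫ ≤ c} :=
    convex_halfSpace_le (innerₛₗ ℝ u).isLinear c
  rw [isoscelesTriangle_eq_inter]
  exact ((hconv _ _).inter (hconv _ _)).inter (hconv _ _)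

theorem convexHull_triangleVertices :
    convexHull ℝ triangleVertices = isoscelesTriangle 0 (3 / 2) := by
  apply subset_antisymm
  · refine convexHull_min ?_ (convex_isoscelesTriangle 0 (3 / 2))
    rintro q (rfl | rfl | rfl) <;> norm_num [isoscelesTriangle]
  · rintro p ⟨h₀, h₁, h₂⟩
    -- barycentric coordinates of `p`
    have hp : p = (1 / 2 - 2 * p 0 / 3 - p 1) • pt 0 (-(1 / 2)) +
        (1 / 2 - 2 * p 0 / 3 + p 1) • pt 0 (1 / 2) + (4 * p 0 / 3) • pt (3 / 4) 0 := by
      ext i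
      fin_cases i <;> simp <;> ring
    have hsum := (convex_convexHull ℝ triangleVertices).sum_mem (t := Finset.univ)
      (w := ![1 / 2 - 2 * p 0 / 3 - p 1, 1 / 2 - 2 * p 0 / 3 + p 1, 4 * p 0 / 3])
      (z := ![pt 0 (-(1 / 2)), pt 0 (1 / 2), pt (3 / 4) 0])
      (fun i _ => by fin_cases i <;> simp <;> linarith)
      (by simp [Fin.sum_univ_three]; ring)
      (fun i _ => by fin_cases i <;> apply subset_convexHull <;> simp [triangleVertices])
    rw [hp]
    simpa [Fin.sum_univ_three] using hsum

theorem inter_inner_lt_subset_interior_convexHull :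
    {p | ⟪pt (-1) 0, p⟫ < 0} ∩ {p | ⟪pt 2 3, p⟫ < 3 / 2} ∩ {p | ⟪pt 2 (-3), p⟫ < 3 / 2} ⊆
      interior (convexHull ℝ triangleVertices) := by
  have hopen (u : EuclideanSpace ℝ (Fin 2)) (c : ℝ) : IsOpen {p | ⟪u, p⟫ < c} :=
    isOpen_lt (continuous_const.inner continuous_id) continuous_const
  refine interior_maximal ?_ (((hopen _ _).inter (hopen _ _)).inter (hopen _ _))
  rw [convexHull_triangleVertices, isoscelesTriangle_eq_inter, neg_zero]
  have hle (u : EuclideanSpace ℝ (Fin 2)) (c : ℝ) : {p | ⟪u, p⟫ < c} ⊆ {p | ⟪u, p⟫ ≤ c} :=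
    ofPred_subset_ofPred.2 fun _ => le_of_lt
  exact inter_subset_inter (inter_subset_inter (hle _ _) (hle _ _)) (hle _ _)

theorem ball_subset_interior_convexHull_iff {x : EuclideanSpace ℝ (Fin 2)} {r : ℝ} (hr : 0 < r) :
    ball x r ⊆ interior (convexHull ℝ triangleVertices) ↔
      x ∈ isoscelesTriangle r (3 / 2 - √13 * r) := by
  have hnorm₀ : ‖pt (-1) 0‖ = 1 := by simp [norm_pt]
  have hnorm₁ (s : ℝ) (hs : s ^ 2 = 9) : ‖pt 2 s‖ = √13 := by rw [norm_pt, hs]; norm_num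
  rw [isoscelesTriangle_eq_inter]
  simp only [mem_inter_iff, mem_ofPred_eq]
  constructor
  · intro h
    have hT := h.trans interior_subset
    rw [convexHull_triangleVertices, isoscelesTriangle_eq_inter, neg_zero] at hT
    simp only [subset_inter_iff] at hT
    obtain ⟨⟨h₀, h₁⟩, h₂⟩ := hT
    have h₀ := inner_add_mul_norm_le_of_ball_subset hr h₀
    have h₁ := inner_add_mul_norm_le_of_ball_subset hr h₁
    have h₂ := inner_add_mul_norm_le_of_ball_subset hr h₂
    rw [hnorm₀] at h₀
    rw [hnorm₁ _ (by norm_num)] at h₁ h₂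
    exact ⟨⟨by linarith, by linarith⟩, by linarith⟩
  · rintro ⟨⟨h₀, h₁⟩, h₂⟩
    refine (subset_inter (subset_inter ?_ ?_) ?_).trans inter_inner_lt_subset_interior_convexHull
    · exact ball_subset_inner_lt (pt_ne_zero _ (by norm_num)) (by rw [hnorm₀]; linarith)
    · exact ball_subset_inner_lt (pt_ne_zero _ (by norm_num))
        (by rw [hnorm₁ _ (by norm_num)]; linarith)
    · exact ball_subset_inner_lt (pt_ne_zero _ (by norm_num))
        (by rw [hnorm₁ _ (by norm_num)]; linarith)

theorem dist_le_of_mem_isoscelesTriangle {x y : EuclideanSpace ℝ (Fin 2)} {r c : ℝ}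
    (hx : x ∈ isoscelesTriangle r c) (hy : y ∈ isoscelesTriangle r c) :
    dist x y ≤ 2 * (c - 2 * r) / 3 := by
  obtain ⟨hx₀, hx₁, hx₂⟩ := hx
  obtain ⟨hy₀, hy₁, hy₂⟩ := hy
  rw [EuclideanSpace.dist_eq, Fin.sum_univ_two, Real.sqrt_le_left (by linarith)]
  simp only [Real.dist_eq, sq_abs]
  nlinarith [mul_nonneg (sub_nonneg.2 hx₀) (sub_nonneg.2 hy₀), sq_nonneg (x 0 + y 0 - 2 * r)]

def twoDisjointBallRadii {X : Type*} [PseudoMetricSpace X] (K : Set X) : Set ℝ :=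
  {r | 0 < r ∧ ∃ x₁ x₂ : X, ball x₁ r ⊆ K ∧ ball x₂ r ⊆ K ∧ ball x₁ r ∩ ball x₂ r = ∅}

theorem isGreatest_twoDisjointBallRadii :
    IsGreatest (twoDisjointBallRadii (interior (convexHull ℝ triangleVertices)))
      (3 / (2 * (5 + √13))) := by
  set r₂ := 3 / (2 * (5 + √13)) with hr₂
  have hr₂pos : 0 < r₂ := by positivity
  have hval : (5 + √13) * r₂ = 3 / 2 := by rw [hr₂]; field_simp
  constructor
  · have hfit (s : ℝ) (hs : |s| = r₂) :
        ball (pt r₂ s) r₂ ⊆ interior (convexHull ℝ triangleVertices) := by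
      rw [ball_subset_interior_convexHull_iff hr₂pos]
      refine ⟨le_rfl, ?_, ?_⟩ <;> simp only [pt_apply_zero, pt_apply_one] <;>
        cases abs_cases s <;> linarith
    refine ⟨hr₂pos, pt r₂ r₂, pt r₂ (-r₂), hfit _ (abs_of_pos hr₂pos),
      hfit _ (by rw [abs_neg, abs_of_pos hr₂pos]), ?_⟩
    refine disjoint_iff_inter_eq_empty.1 (ball_disjoint_ball ?_)
    rw [dist_pt, sub_self, sub_neg_eq_add, zero_pow two_ne_zero, zero_add,
      Real.sqrt_sq (by positivity)]
  · rintro r ⟨hr, x₁, x₂, h₁, h₂, hdisj⟩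
    have hsep : r + r ≤ dist x₁ x₂ :=
      (disjoint_ball_ball_iff hr hr).1 (disjoint_iff_inter_eq_empty.2 hdisj)
    have hdiam := dist_le_of_mem_isoscelesTriangle ((ball_subset_interior_convexHull_iff hr).1 h₁)
      ((ball_subset_interior_convexHull_iff hr).1 h₂)
    rw [hr₂, le_div_iff₀ (by positivity)]
    linarith

/-- The largest radius `r` such that two disjoint open balls of
radius `r` fit inside the open isosceles triangle with vertices `(0,-1/2)`,
`(0,1/2)`, `(3/4,0)` (base 1, height 3/4) equals `3/(2(5 + √13))`. -/
theorem stmt_13 :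
    sSup {r : ℝ | 0 < r ∧ ∃ x₁ x₂ : EuclideanSpace ℝ (Fin 2),
        Metric.ball x₁ r ⊆ interior (convexHull ℝ
          ({pt 0 (-(1 / 2)), pt 0 (1 / 2), pt (3 / 4) 0} : Set (EuclideanSpace ℝ (Fin 2)))) ∧
        Metric.ball x₂ r ⊆ interior (convexHull ℝ
          ({pt 0 (-(1 / 2)), pt 0 (1 / 2), pt (3 / 4) 0} : Set (EuclideanSpace ℝ (Fin 2)))) ∧
        Metric.ball x₁ r ∩ Metric.ball x₂ r = ∅} =
      3 / (2 * (5 + Real.sqrt 13)) :=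
  isGreatest_twoDisjointBallRadii.csSup_eq
end
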